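/- Suppose X and Y are nonnegative square-integrable random variables with E[X] ≤ δ and E[X ≥ ε] having probability at most δ/ε. Then E[(X − Y)²] ≥ E[Y²] − √(δ/ε)·√(E[Y⁴]) − 2ε√(E[Y²]). -/

import Mathlib

open MeasureTheory

/-! On the event `{X < ε}` we have `(X - Y)² ≥ Y² - 2εY`, because `Y ≥ 0`. Its complement
`{ε ≤ X}` has probability at most `δ/ε`, so by Cauchy–Schwarz it carries at most
`√(δ/ε) · √E[Y⁴]` of `E[Y²]`; and by Cauchy–Schwarz again `E[Y; X < ε] ≤ √E[Y²]`. -/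

theorem setIntegral_le_sqrt_measureReal_mul_sqrt_integral_sq {α : Type*} [MeasurableSpace α]
    {μ : Measure α} [IsFiniteMeasure μ] {f : α → ℝ} (hf : MemLp f 2 μ) (hf0 : 0 ≤ᵐ[μ] f)
    (s : Set α) :
    ∫ x in s, f x ∂μ ≤ √(μ.real s) * √(∫ x, f x ^ 2 ∂μ) := by
  have hCS := integral_mul_le_Lp_mul_Lq_of_nonneg (μ := μ.restrict s)
    Real.HolderConjugate.two_two (Filter.Eventually.of_forall fun _ => zero_le_one)
    (ae_restrict_of_ae hf0) (by simpa using memLp_const (μ := μ.restrict s) (p := 2) (1 : ℝ))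
    (by simpa using hf.restrict s)
  simp only [one_mul, one_pow, integral_const, smul_eq_mul, mul_one, Real.rpow_two,
    measureReal_restrict_apply_univ, ← Real.sqrt_eq_rpow] at hCS
  refine hCS.trans (mul_le_mul_of_nonneg_left (Real.sqrt_le_sqrt ?_) (Real.sqrt_nonneg _))
  exact setIntegral_le_integral hf.integrable_sq
    (Filter.Eventually.of_forall fun x => sq_nonneg (f x))

theorem loss_lower_bound_near_dead_neuron_general {Ω : Type*} [MeasurableSpace Ω]
    (μ : Measure Ω) [IsProbabilityMeasure μ] (X Y : Ω → ℝ)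
    (hXmeas : Measurable X) (hYmeas : Measurable Y)
    (hYnonneg : ∀ ω, 0 ≤ Y ω)
    (hY2 : Integrable (fun ω => Y ω ^ 2) μ)
    (hY4 : Integrable (fun ω => Y ω ^ 4) μ)
    (hXY2 : Integrable (fun ω => (X ω - Y ω) ^ 2) μ)
    (δ ε : ℝ) (hε : 0 < ε)
    (htail : (μ {ω | ε ≤ X ω}).toReal ≤ δ / ε) :
    (∫ ω, Y ω ^ 2 ∂μ) - Real.sqrt (δ / ε) * Real.sqrt (∫ ω, Y ω ^ 4 ∂μ)
        - 2 * ε * Real.sqrt (∫ ω, Y ω ^ 2 ∂μ) ≤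
      ∫ ω, (X ω - Y ω) ^ 2 ∂μ := by
  set A := {ω | ε ≤ X ω}
  have hA : MeasurableSet A := measurableSet_le measurable_const hXmeas
  have hY : MemLp Y 2 μ := (memLp_two_iff_integrable_sq hYmeas.aestronglyMeasurable).2 hY2
  have hYsq : MemLp (fun ω => Y ω ^ 2) 2 μ :=
    (memLp_two_iff_integrable_sq (hYmeas.pow_const 2).aestronglyMeasurable).2 <| by
      simpa only [← pow_mul] using hY4
  have hYint : Integrable Y μ := hY.integrable one_le_two
  have hsq_on_tail : ∫ ω in A, Y ω ^ 2 ∂μ ≤ √(δ / ε) * √(∫ ω, Y ω ^ 4 ∂μ) := by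
    have := setIntegral_le_sqrt_measureReal_mul_sqrt_integral_sq hYsq
      (Filter.Eventually.of_forall fun ω => sq_nonneg (Y ω)) A
    simp only [← pow_mul] at this
    exact this.trans (by gcongr; exact htail)
  have hmean_off_tail : ∫ ω in Aᶜ, Y ω ∂μ ≤ √(∫ ω, Y ω ^ 2 ∂μ) := by
    refine (setIntegral_le_sqrt_measureReal_mul_sqrt_integral_sq hY
      (Filter.Eventually.of_forall hYnonneg) Aᶜ).trans ?_
    exact mul_le_of_le_one_left (Real.sqrt_nonneg _) (Real.sqrt_le_one.mpr measureReal_le_one)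
  calc ∫ ω, Y ω ^ 2 ∂μ - √(δ / ε) * √(∫ ω, Y ω ^ 4 ∂μ) - 2 * ε * √(∫ ω, Y ω ^ 2 ∂μ)
      ≤ ∫ ω, Y ω ^ 2 ∂μ - ∫ ω in A, Y ω ^ 2 ∂μ - 2 * ε * ∫ ω in Aᶜ, Y ω ∂μ := by gcongr
    _ = ∫ ω in Aᶜ, (Y ω ^ 2 - 2 * ε * Y ω) ∂μ := by
      rw [integral_sub hY2.integrableOn (hYint.const_mul _).integrableOn, integral_const_mul,
        ← integral_add_compl hA hY2]
      ring
    _ ≤ ∫ ω in Aᶜ, (X ω - Y ω) ^ 2 ∂μ := by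
      refine setIntegral_mono_on (hY2.sub (hYint.const_mul _)).integrableOn hXY2.integrableOn
        hA.compl fun ω hω => ?_
      have hX : X ω < ε := not_le.mp hω
      nlinarith [mul_nonneg (sub_nonneg.2 hX.le) (hYnonneg ω), sq_nonneg (X ω)]
    _ ≤ ∫ ω, (X ω - Y ω) ^ 2 ∂μ :=
      setIntegral_le_integral hXY2 (Filter.Eventually.of_forall fun ω => sq_nonneg _)

/-- If `X, Y ≥ 0`, `E[X] ≤ δ` and `P(X ≥ ε) ≤ δ/ε`, then
`E[(X − Y)²] ≥ E[Y²] − √(δ/ε)·√(E[Y⁴]) − 2ε√(E[Y²])`. -/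
theorem loss_lower_bound_near_dead_neuron {Ω : Type*} [MeasurableSpace Ω]
    (μ : Measure Ω) [IsProbabilityMeasure μ] (X Y : Ω → ℝ)
    (hXmeas : Measurable X) (hYmeas : Measurable Y)
    (hXnonneg : ∀ ω, 0 ≤ X ω) (hYnonneg : ∀ ω, 0 ≤ Y ω)
    (hXint : Integrable X μ)
    (hY2 : Integrable (fun ω => Y ω ^ 2) μ)
    (hY4 : Integrable (fun ω => Y ω ^ 4) μ)
    (hXY2 : Integrable (fun ω => (X ω - Y ω) ^ 2) μ)
    (δ ε : ℝ) (hδ : 0 < δ) (hε : 0 < ε)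
    (hmean : ∫ ω, X ω ∂μ ≤ δ)
    (htail : (μ {ω | ε ≤ X ω}).toReal ≤ δ / ε) :
    (∫ ω, Y ω ^ 2 ∂μ) - Real.sqrt (δ / ε) * Real.sqrt (∫ ω, Y ω ^ 4 ∂μ)
        - 2 * ε * Real.sqrt (∫ ω, Y ω ^ 2 ∂μ) ≤
      ∫ ω, (X ω - Y ω) ^ 2 ∂μ :=
  loss_lower_bound_near_dead_neuron_general μ X Y hXmeas hYmeas hYnonneg hY2 hY4 hXY2 δ ε hε htail
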